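/- Let n ≡ 14 (mod 16). Then the number of partitions of n into two part sizes with λ1, λ2 both even and m1, m2 both odd (parity class EOEO) is even. -/

import Mathlib

/-- Partitions of `n` into exactly two part sizes, as quadruples `(λ1, m1, λ2, m2)`. -/
def TwoSize (n : ℕ) : Set (ℕ × ℕ × ℕ × ℕ) :=
  {q | q.2.2.1 < q.1 ∧ 1 ≤ q.2.2.1 ∧ 1 ≤ q.2.1 ∧ 1 ≤ q.2.2.2 ∧
    q.1 * q.2.1 + q.2.2.1 * q.2.2.2 = n}

/-!
The involution `ρ` exchanging, in each block `λ^m`, the odd part of `λ` with the odd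
multiplicity `m` keeps both blocks of type (even size, odd multiplicity) and keeps each
product `λ * m`. The two new sizes differ, since equal even sizes with odd multiplicities
would give `4 ∣ n`. A fixed point of `ρ` either swaps the two blocks, so `n = 2 λ₁ m₁` is
divisible by `4`, or fixes each block, so each `λ * m = 2^k m²` with `k ≥ 1` is `0, 2, 4` or
`8` mod `16`, and no two of these add up to `14`. So `ρ` pairs up the EOEO partitions.
-/

theorem Set.even_ncard_of_involution {α : Type*} {s : Set α} (hs : s.Finite) {f : α → α}
    (hmaps : Set.MapsTo f s s) (hinv : ∀ a ∈ s, f (f a) = a) (hfree : ∀ a ∈ s, f a ≠ a) :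
    Even s.ncard := by
  classical
  have := hs.fintype
  let g : Function.End s := hmaps.restrict f s s
  have hg : g ^ 2 ^ 1 = 1 := funext fun a => Subtype.ext (hinv a a.2)
  have hfix : Fintype.card g.fixedPoints = 0 :=
    Fintype.card_eq_zero_iff.2 ⟨fun a => hfree a.1 a.1.2 (congrArg Subtype.val a.2)⟩
  rw [← Nat.card_coe_set_eq, Nat.card_eq_fintype_card, Nat.even_iff]
  simpa [hfix, Nat.ModEq] using Equiv.Perm.card_fixedPoints_modEq (p := 2) hg

theorem Nat.two_pow_mul_sq_mod_sixteen_of_odd {k b : ℕ} (hk : k ≠ 0) (hb : Odd b) :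
    2 ^ k * b ^ 2 % 16 ∈ ({0, 2, 4, 8} : Finset ℕ) := by
  obtain ⟨m, hm⟩ : ∃ m, b ^ 2 = 8 * m + 1 := by
    obtain ⟨j, rfl⟩ := hb
    obtain ⟨m, hm⟩ := Nat.even_mul_succ_self j
    exact ⟨m, by nlinarith⟩
  rw [hm]
  match k, hk with
  | 1, _ | 2, _ | 3, _ =>
    simp only [Finset.mem_insert, Finset.mem_singleton]
    omega
  | k + 4, _ =>
    have h16 : 16 ∣ 2 ^ (k + 4) * (8 * m + 1) :=
      (pow_dvd_pow 2 (Nat.le_add_left 4 k)).mul_right _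
    simp [Nat.mod_eq_zero_of_dvd h16]

theorem Nat.four_dvd_mul_add_mul {a b d : ℕ} (ha : Even a) (hb : Odd b) (hd : Odd d) :
    4 ∣ a * b + a * d := by
  obtain ⟨x, rfl⟩ := ha
  rw [← mul_add, ← two_mul x]
  exact mul_dvd_mul (dvd_mul_right 2 x) (even_iff_two_dvd.1 (hb.add_odd hd))

/-- `(2^k ℓ, m) ↦ (2^k m, ℓ)` with `ℓ` odd; for odd `m` it exchanges `ℓ(λ)` and `ℓ(m)`. -/
def oddPartSwap (p : ℕ × ℕ) : ℕ × ℕ := (ordProj[2] p.1 * p.2, ordCompl[2] p.1)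

def EvenOddBlock (p : ℕ × ℕ) : Prop := Even p.1 ∧ p.1 ≠ 0 ∧ Odd p.2

theorem oddPartSwap_mul (p : ℕ × ℕ) :
    (oddPartSwap p).1 * (oddPartSwap p).2 = p.1 * p.2 := by
  rw [oddPartSwap, mul_right_comm, Nat.ordProj_mul_ordCompl_eq_self]

theorem oddPartSwap_oddPartSwap {p : ℕ × ℕ} (hodd : Odd p.2) :
    oddPartSwap (oddPartSwap p) = p := by
  have hfac : (ordProj[2] p.1 * p.2).factorization 2 = p.1.factorization 2 := by
    rw [Nat.factorization_mul (by positivity) hodd.pos.ne', Finsupp.add_apply,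
      Nat.prime_two.factorization_pow, Finsupp.single_eq_same,
      Nat.factorization_eq_zero_of_not_dvd hodd.not_two_dvd_nat, add_zero]
  simp only [oddPartSwap, hfac, Nat.mul_div_cancel_left _ (Nat.ordProj_pos p.1 2),
    Nat.ordProj_mul_ordCompl_eq_self]

theorem EvenOddBlock.oddPartSwap {p : ℕ × ℕ} (h : EvenOddBlock p) :
    EvenOddBlock (oddPartSwap p) := by
  obtain ⟨heven, h₀, hodd⟩ := h
  have hk : p.1.factorization 2 ≠ 0 :=
    (Nat.prime_two.factorization_pos_of_dvd h₀ heven.two_dvd).ne'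
  refine ⟨(Nat.even_pow.2 ⟨even_two, hk⟩).mul_right _,
    mul_ne_zero (by positivity) hodd.pos.ne', ?_⟩
  exact Nat.not_even_iff_odd.1 fun h => Nat.not_dvd_ordCompl Nat.prime_two h₀ h.two_dvd

theorem EvenOddBlock.mul_mod_sixteen_of_ordCompl_eq {p : ℕ × ℕ} (h : EvenOddBlock p)
    (hfix : ordCompl[2] p.1 = p.2) : p.1 * p.2 % 16 ∈ ({0, 2, 4, 8} : Finset ℕ) := by
  obtain ⟨heven, h₀, hodd⟩ := h
  have hk : p.1.factorization 2 ≠ 0 :=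
    (Nat.prime_two.factorization_pos_of_dvd h₀ heven.two_dvd).ne'
  have hsq : p.1 * p.2 = 2 ^ p.1.factorization 2 * p.2 ^ 2 := by
    conv_lhs => rw [← Nat.ordProj_mul_ordCompl_eq_self p.1 2, hfix]
    ring
  rw [hsq]
  exact Nat.two_pow_mul_sq_mod_sixteen_of_odd hk hodd

theorem EvenOddBlock.fst_ne_of_not_four_dvd {p₁ p₂ : ℕ × ℕ}
    (h₁ : EvenOddBlock p₁) (h₂ : EvenOddBlock p₂) (hn : ¬ 4 ∣ p₁.1 * p₁.2 + p₂.1 * p₂.2) :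
    p₁.1 ≠ p₂.1 := by
  intro heq
  rw [← heq] at hn
  exact hn (Nat.four_dvd_mul_add_mul h₁.1 h₁.2.2 h₂.2.2)

def sortBlocks (p₁ p₂ : ℕ × ℕ) : ℕ × ℕ × ℕ × ℕ :=
  if p₂.1 < p₁.1 then (p₁.1, p₁.2, p₂.1, p₂.2) else (p₂.1, p₂.2, p₁.1, p₁.2)

theorem sortBlocks_of_lt {p₁ p₂ : ℕ × ℕ} (h : p₂.1 < p₁.1) :
    sortBlocks p₁ p₂ = (p₁.1, p₁.2, p₂.1, p₂.2) :=
  if_pos h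

theorem sortBlocks_comm {p₁ p₂ : ℕ × ℕ} (h : p₁.1 ≠ p₂.1) :
    sortBlocks p₁ p₂ = sortBlocks p₂ p₁ := by
  unfold sortBlocks
  split_ifs <;> first | rfl | omega

theorem eq_and_eq_or_eq_and_eq_of_sortBlocks_eq {p₁ p₂ q₁ q₂ : ℕ × ℕ}
    (h : sortBlocks p₁ p₂ = (q₁.1, q₁.2, q₂.1, q₂.2)) :
    p₁ = q₁ ∧ p₂ = q₂ ∨ p₂ = q₁ ∧ p₁ = q₂ := by
  unfold sortBlocks at h
  split_ifs at h <;> simp_all [Prod.ext_iff]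

theorem TwoSize.finite (n : ℕ) : (TwoSize n).Finite := by
  refine (Set.finite_Icc 0 (n, n, n, n)).subset ?_
  rintro ⟨a, b, c, d⟩ ⟨h₁, h₂, h₃, h₄, hsum⟩
  simp only [Set.mem_Icc, Prod.mk_le_mk] at *
  refine ⟨⟨a.zero_le, b.zero_le, c.zero_le, d.zero_le⟩, ?_, ?_, ?_, ?_⟩ <;> nlinarith

def twoSizeEOEO (n : ℕ) : Set (ℕ × ℕ × ℕ × ℕ) :=
  {q ∈ TwoSize n | Even q.1 ∧ Odd q.2.1 ∧ Even q.2.2.1 ∧ Odd q.2.2.2}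

theorem mem_twoSizeEOEO {n a b c d : ℕ} :
    (a, b, c, d) ∈ twoSizeEOEO n ↔
      c < a ∧ EvenOddBlock (a, b) ∧ EvenOddBlock (c, d) ∧ a * b + c * d = n := by
  simp only [twoSizeEOEO, TwoSize, EvenOddBlock, Set.mem_ofPred_eq]
  constructor
  · rintro ⟨⟨hlt, hc, -, -, hsum⟩, ha, hb, hc', hd⟩
    exact ⟨hlt, ⟨ha, by omega, hb⟩, ⟨hc', by omega, hd⟩, hsum⟩
  · rintro ⟨hlt, ⟨ha, -, hb⟩, ⟨hc', hc, hd⟩, hsum⟩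
    exact ⟨⟨hlt, by omega, hb.pos, hd.pos, hsum⟩, ha, hb, hc', hd⟩

theorem sortBlocks_mem_twoSizeEOEO {n : ℕ} {p₁ p₂ : ℕ × ℕ} (hne : p₁.1 ≠ p₂.1)
    (h₁ : EvenOddBlock p₁) (h₂ : EvenOddBlock p₂)
    (hsum : p₁.1 * p₁.2 + p₂.1 * p₂.2 = n) :
    sortBlocks p₁ p₂ ∈ twoSizeEOEO n := by
  rcases hne.lt_or_gt with hlt | hlt
  · rw [sortBlocks_comm hne, sortBlocks_of_lt hlt, mem_twoSizeEOEO]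
    exact ⟨hlt, h₂, h₁, by rw [← hsum, add_comm]⟩
  · rw [sortBlocks_of_lt hlt, mem_twoSizeEOEO]
    exact ⟨hlt, h₁, h₂, hsum⟩

def swapOddParts (q : ℕ × ℕ × ℕ × ℕ) : ℕ × ℕ × ℕ × ℕ :=
  sortBlocks (oddPartSwap (q.1, q.2.1)) (oddPartSwap (q.2.2.1, q.2.2.2))

theorem swapOddParts_sortBlocks {p₁ p₂ : ℕ × ℕ}
    (h : (oddPartSwap p₁).1 ≠ (oddPartSwap p₂).1) :
    swapOddParts (sortBlocks p₁ p₂) = sortBlocks (oddPartSwap p₁) (oddPartSwap p₂) := by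
  by_cases hlt : p₂.1 < p₁.1
  · rw [sortBlocks_of_lt hlt]
    rfl
  · rw [sortBlocks, if_neg hlt]
    exact sortBlocks_comm h.symm

theorem mapsTo_swapOddParts {n : ℕ} (hn : ¬ 4 ∣ n) :
    Set.MapsTo swapOddParts (twoSizeEOEO n) (twoSizeEOEO n) := by
  rintro ⟨a, b, c, d⟩ hq
  obtain ⟨-, h₁, h₂, hsum⟩ := mem_twoSizeEOEO.1 hq
  have hsum' : (oddPartSwap (a, b)).1 * (oddPartSwap (a, b)).2 +
      (oddPartSwap (c, d)).1 * (oddPartSwap (c, d)).2 = n := by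
    rw [oddPartSwap_mul, oddPartSwap_mul, ← hsum]
  exact sortBlocks_mem_twoSizeEOEO
    (h₁.oddPartSwap.fst_ne_of_not_four_dvd h₂.oddPartSwap (hsum' ▸ hn))
    h₁.oddPartSwap h₂.oddPartSwap hsum'

theorem swapOddParts_swapOddParts {n : ℕ} {q : ℕ × ℕ × ℕ × ℕ}
    (hq : q ∈ twoSizeEOEO n) :
    swapOddParts (swapOddParts q) = q := by
  obtain ⟨a, b, c, d⟩ := q
  obtain ⟨hlt, h₁, h₂, -⟩ := mem_twoSizeEOEO.1 hq
  have hinv₁ := oddPartSwap_oddPartSwap (p := (a, b)) h₁.2.2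
  have hinv₂ := oddPartSwap_oddPartSwap (p := (c, d)) h₂.2.2
  change swapOddParts (sortBlocks (oddPartSwap (a, b)) (oddPartSwap (c, d))) = _
  rw [swapOddParts_sortBlocks (by rw [hinv₁, hinv₂]; exact hlt.ne'),
    hinv₁, hinv₂]
  exact sortBlocks_of_lt hlt

theorem swapOddParts_ne_self {n : ℕ} (hn : n % 16 = 14) {q : ℕ × ℕ × ℕ × ℕ}
    (hq : q ∈ twoSizeEOEO n) : swapOddParts q ≠ q := by
  obtain ⟨a, b, c, d⟩ := q
  obtain ⟨-, h₁, h₂, hsum⟩ := mem_twoSizeEOEO.1 hq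
  intro hfix
  rcases eq_and_eq_or_eq_and_eq_of_sortBlocks_eq (q₁ := (a, b)) (q₂ := (c, d)) hfix with
    ⟨hfix₁, hfix₂⟩ | ⟨-, hswap⟩
  · have r₁ := h₁.mul_mod_sixteen_of_ordCompl_eq (congrArg Prod.snd hfix₁)
    have r₂ := h₂.mul_mod_sixteen_of_ordCompl_eq (congrArg Prod.snd hfix₂)
    simp only [Finset.mem_insert, Finset.mem_singleton] at r₁ r₂
    omega
  · have hcd : c * d = a * b := by rw [← oddPartSwap_mul (a, b), hswap]
    have h4 := Nat.four_dvd_mul_add_mul (a := a) (b := b) (d := b) h₁.1 h₁.2.2 h₁.2.2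
    omega

theorem EOEO_even (n : ℕ) (hn : n % 16 = 14) :
    Even (Set.ncard {q ∈ TwoSize n |
      Even q.1 ∧ Odd q.2.1 ∧ Even q.2.2.1 ∧ Odd q.2.2.2}) :=
  Set.even_ncard_of_involution ((TwoSize.finite n).subset fun _ hq => hq.1)
    (mapsTo_swapOddParts (by omega)) (fun _ => swapOddParts_swapOddParts)
    (fun _ => swapOddParts_ne_self hn)
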